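/- arXiv:1905.10546 — 4 statements merged into one kernel-verified Lean document; each statement's English description precedes it below -/
import Mathlib

section
/- Suppose λ_a is a supergradient of the concave function R_a* at w*. Then a classifier c : X → [0,1] with W_{u,c}(a) = w* satisfies R_a(c) = R_a*(w*) if and only if c maximizes the Lagrangian R_a(c') − λ_a·W_{u,c'}(a) over all classifiers c' : X → [0,1]. In particular, any optimal c must satisfy c(x) = 1 whenever r(x,a) > λ_a·ū(x,a) and c(x) = 0 whenever r(x,a) < λ_a·ū(x,a), for all x with P(x|A=a) > 0. -/
/-!
Every classifier `c'` earns `R(c') ≤ R*(W(c'))` with `W(c')` in the domain of `R*`, so the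
supergradient inequality bounds the Lagrangian `R(c') - λ W(c')` by `R*(w*) - λ w*`, a bound that
an optimal `c` with `W(c) = w*` attains. Conversely, a Lagrangian maximizer with welfare `w*` beats
every classifier of the same welfare. The Lagrangian is the linear functional `∑ q (r - λ ū) c` on
the cube `[0,1]^X`; a maximizer sits at `1` where the coefficient is positive and at `0` where it is
negative, since otherwise moving that one coordinate to the endpoint increases the value.
-/

/-- Subgroup-optimal revenue R_a*(w). -/
noncomputable def Rstar {X : Type*} [Fintype X]
    (q r ubar : X → ℝ) (w : ℝ) : ℝ :=
  sSup {v : ℝ | ∃ c : X → ℝ, (∀ x, c x ∈ Set.Icc (0:ℝ) 1) ∧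
    (∑ x, q x * ubar x * c x) = w ∧ (∑ x, q x * r x * c x) = v}

open Finset

theorem update_mem_Icc_zero_one {X : Type*} [DecidableEq X] {c : X → ℝ}
    (hc : ∀ x, c x ∈ Set.Icc (0:ℝ) 1) (x₀ : X) {t : ℝ} (ht : t ∈ Set.Icc (0:ℝ) 1) (x : X) :
    Function.update c x₀ t x ∈ Set.Icc (0:ℝ) 1 := by
  rcases eq_or_ne x x₀ with rfl | hx
  · simpa using ht
  · simpa [Function.update_of_ne hx] using hc x

section

variable {X : Type*} [Fintype X]

theorem sum_mul_update [DecidableEq X] (g c : X → ℝ) (x₀ : X) (t : ℝ) :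
    ∑ x, g x * Function.update c x₀ t x = ∑ x, g x * c x + g x₀ * (t - c x₀) := by
  rw [← sub_eq_iff_eq_add', ← sum_sub_distrib, sum_eq_single x₀]
  · simp [mul_sub]
  · intro x _ hx
    simp [Function.update_of_ne hx]
  · simp

theorem eq_one_and_eq_zero_of_forall_sum_mul_le {g c : X → ℝ}
    (hc : ∀ x, c x ∈ Set.Icc (0:ℝ) 1)
    (hmax : ∀ c' : X → ℝ, (∀ x, c' x ∈ Set.Icc (0:ℝ) 1) →
      ∑ x, g x * c' x ≤ ∑ x, g x * c x) (x : X) :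
    (0 < g x → c x = 1) ∧ (g x < 0 → c x = 0) := by
  classical
  have hmove : ∀ t ∈ Set.Icc (0:ℝ) 1, g x * (t - c x) ≤ 0 := fun t ht => by
    have := hmax _ (update_mem_Icc_zero_one hc x ht)
    rw [sum_mul_update] at this
    linarith
  constructor
  · intro hg
    have := hmove 1 ⟨zero_le_one, le_rfl⟩
    exact le_antisymm (hc x).2 (by nlinarith)
  · intro hg
    have := hmove 0 ⟨le_rfl, zero_le_one⟩
    exact le_antisymm (by nlinarith) (hc x).1

theorem lagrangian_eq_sum_mul (q r ubar c : X → ℝ) (lam : ℝ) :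
    (∑ x, q x * r x * c x) - lam * (∑ x, q x * ubar x * c x) =
      ∑ x, q x * (r x - lam * ubar x) * c x := by
  rw [mul_sum, ← sum_sub_distrib]
  exact sum_congr rfl fun x _ => by ring

theorem Rstar_le_revenue_of_forall_lagrangian_le {q r ubar c : X → ℝ} {lam : ℝ}
    (hc : ∀ x, c x ∈ Set.Icc (0:ℝ) 1)
    (hmax : ∀ c' : X → ℝ, (∀ x, c' x ∈ Set.Icc (0:ℝ) 1) →
      (∑ x, q x * r x * c' x) - lam * (∑ x, q x * ubar x * c' x) ≤
      (∑ x, q x * r x * c x) - lam * (∑ x, q x * ubar x * c x)) :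
    Rstar q r ubar (∑ x, q x * ubar x * c x) ≤ ∑ x, q x * r x * c x := by
  refine csSup_le ⟨_, c, hc, rfl, rfl⟩ ?_
  rintro v ⟨c', hc', hw', rfl⟩
  have := hmax c' hc'
  rw [hw'] at this
  linarith

variable {q : X → ℝ} (hq : ∀ x, 0 ≤ q x)
include hq

theorem bddAbove_revenues (r ubar : X → ℝ) (w : ℝ) :
    BddAbove {v : ℝ | ∃ c : X → ℝ, (∀ x, c x ∈ Set.Icc (0:ℝ) 1) ∧
      (∑ x, q x * ubar x * c x) = w ∧ (∑ x, q x * r x * c x) = v} := by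
  refine ⟨∑ x, q x * |r x|, ?_⟩
  rintro v ⟨c, hc, -, rfl⟩
  refine sum_le_sum fun x _ => ?_
  have hrc : r x * c x ≤ |r x| := (le_abs_self _).trans <| by
    rw [abs_mul, abs_of_nonneg (hc x).1]
    exact mul_le_of_le_one_right (abs_nonneg _) (hc x).2
  rw [mul_assoc]
  exact mul_le_mul_of_nonneg_left hrc (hq x)

theorem revenue_le_Rstar (r ubar : X → ℝ) {c : X → ℝ} (hc : ∀ x, c x ∈ Set.Icc (0:ℝ) 1) :
    ∑ x, q x * r x * c x ≤ Rstar q r ubar (∑ x, q x * ubar x * c x) :=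
  le_csSup (bddAbove_revenues hq r ubar _) ⟨c, hc, rfl, rfl⟩

theorem welfare_mem_Icc {ubar : X → ℝ} (hu : ∀ x, 0 ≤ ubar x) {c : X → ℝ}
    (hc : ∀ x, c x ∈ Set.Icc (0:ℝ) 1) :
    ∑ x, q x * ubar x * c x ∈ Set.Icc (0:ℝ) (∑ x, q x * ubar x) :=
  ⟨sum_nonneg fun x _ => mul_nonneg (mul_nonneg (hq x) (hu x)) (hc x).1,
    sum_le_sum fun x _ => mul_le_of_le_one_right (mul_nonneg (hq x) (hu x)) (hc x).2⟩

theorem lagrangian_le_of_supergradient {r ubar : X → ℝ} (hu : ∀ x, 0 ≤ ubar x) {wstar lam : ℝ}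
    (hsup : ∀ w' ∈ Set.Icc (0:ℝ) (∑ x, q x * ubar x),
      Rstar q r ubar w' ≤ Rstar q r ubar wstar + lam * (w' - wstar))
    {c : X → ℝ} (hc : ∀ x, c x ∈ Set.Icc (0:ℝ) 1) :
    (∑ x, q x * r x * c x) - lam * (∑ x, q x * ubar x * c x) ≤
      Rstar q r ubar wstar - lam * wstar := by
  have := hsup _ (welfare_mem_Icc hq hu hc)
  have := revenue_le_Rstar hq r ubar hc
  linarith

end

theorem stmt8_general {X : Type*} [Fintype X]
    (q : X → ℝ) (hq : ∀ x, 0 ≤ q x)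
    (r ubar : X → ℝ) (hu : ∀ x, 0 ≤ ubar x)
    (wstar lam : ℝ)
    (hsup : ∀ w' ∈ Set.Icc (0:ℝ) (∑ x, q x * ubar x),
      Rstar q r ubar w' ≤ Rstar q r ubar wstar + lam * (w' - wstar))
    (c : X → ℝ) (hc : ∀ x, c x ∈ Set.Icc (0:ℝ) 1)
    (hcw : ∑ x, q x * ubar x * c x = wstar) :
    ((∑ x, q x * r x * c x) = Rstar q r ubar wstar ↔
      ∀ c' : X → ℝ, (∀ x, c' x ∈ Set.Icc (0:ℝ) 1) →
        (∑ x, q x * r x * c' x) - lam * (∑ x, q x * ubar x * c' x) ≤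
        (∑ x, q x * r x * c x) - lam * (∑ x, q x * ubar x * c x)) ∧
    ((∑ x, q x * r x * c x) = Rstar q r ubar wstar →
      ∀ x, 0 < q x →
        (lam * ubar x < r x → c x = 1) ∧ (r x < lam * ubar x → c x = 0)) := by
  have hiff : (∑ x, q x * r x * c x) = Rstar q r ubar wstar ↔ ∀ c' : X → ℝ,
      (∀ x, c' x ∈ Set.Icc (0:ℝ) 1) →
        (∑ x, q x * r x * c' x) - lam * (∑ x, q x * ubar x * c' x) ≤
        (∑ x, q x * r x * c x) - lam * (∑ x, q x * ubar x * c x) := by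
    refine ⟨fun hopt c' hc' => ?_, fun hmax => ?_⟩
    · rw [hcw, hopt]
      exact lagrangian_le_of_supergradient hq hu hsup hc'
    · subst hcw
      exact le_antisymm (revenue_le_Rstar hq r ubar hc)
        (Rstar_le_revenue_of_forall_lagrangian_le hc hmax)
  refine ⟨hiff, fun hopt x hx => ?_⟩
  have hmax := hiff.1 hopt
  simp only [lagrangian_eq_sum_mul] at hmax
  obtain ⟨hone, hzero⟩ := eq_one_and_eq_zero_of_forall_sum_mul_le hc hmax x
  exact ⟨fun h => hone (mul_pos hx (sub_pos.2 h)),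
    fun h => hzero (mul_neg_of_pos_of_neg hx (sub_neg.2 h))⟩

/-- If λ is a supergradient of R_a* at w*, then a classifier with group
welfare w* is revenue-optimal iff it maximizes the Lagrangian R_a(c) − λ·W(c); in
particular an optimal classifier is 1 where r > λ·ū and 0 where r < λ·ū (on the
support of the conditional distribution). -/
theorem stmt8 {X : Type*} [Fintype X]
    (q : X → ℝ) (hq : ∀ x, 0 ≤ q x) (hqsum : ∑ x, q x = 1)
    (r ubar : X → ℝ) (hu : ∀ x, 0 ≤ ubar x)
    (wstar lam : ℝ) (hw : wstar ∈ Set.Icc (0:ℝ) (∑ x, q x * ubar x))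
    (hsup : ∀ w' ∈ Set.Icc (0:ℝ) (∑ x, q x * ubar x),
      Rstar q r ubar w' ≤ Rstar q r ubar wstar + lam * (w' - wstar))
    (c : X → ℝ) (hc : ∀ x, c x ∈ Set.Icc (0:ℝ) 1)
    (hcw : ∑ x, q x * ubar x * c x = wstar) :
    ((∑ x, q x * r x * c x) = Rstar q r ubar wstar ↔
      ∀ c' : X → ℝ, (∀ x, c' x ∈ Set.Icc (0:ℝ) 1) →
        (∑ x, q x * r x * c' x) - lam * (∑ x, q x * ubar x * c' x) ≤
        (∑ x, q x * r x * c x) - lam * (∑ x, q x * ubar x * c x)) ∧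
    ((∑ x, q x * r x * c x) = Rstar q r ubar wstar →
      ∀ x, 0 < q x →
        (lam * ubar x < r x → c x = 1) ∧ (r x < lam * ubar x → c x = 0)) :=
  stmt8_general q hq r ubar hu wstar lam hsup c hc hcw
end

section
/- The revenue of the optimal u-WE classifier decomposes as: max_{c u-WE} R(c) = max over w ∈ [0, min(E[u|A=0], E[u|A=1])] of P(A=0)·R_0*(w) + P(A=1)·R_1*(w). -/
/-- Probability of group {A = a}. -/
noncomputable def grpProb {X : Type*} [Fintype X] (P : X × Bool → ℝ) (a : Bool) : ℝ :=
  ∑ x : X, P (x, a)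

/-- Group-a welfare of a classifier. -/
noncomputable def welfareG {X : Type*} [Fintype X]
    (P : X × Bool → ℝ) (ubar : X × Bool → ℝ) (c : X × Bool → ℝ) (a : Bool) : ℝ :=
  (∑ x : X, P (x, a) * ubar (x, a) * c (x, a)) / grpProb P a

/-- Bank's revenue of a classifier. -/
noncomputable def revenue {X : Type*} [Fintype X]
    (P : X × Bool → ℝ) (r : X × Bool → ℝ) (c : X × Bool → ℝ) : ℝ :=
  ∑ z : X × Bool, P z * r z * c z

/-- Subgroup-optimal revenue R_a*(w), w.r.t. the conditional distribution of X given A=a. -/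
noncomputable def RstarG {X : Type*} [Fintype X]
    (P : X × Bool → ℝ) (r ubar : X × Bool → ℝ) (a : Bool) (w : ℝ) : ℝ :=
  sSup {v : ℝ | ∃ c : X → ℝ, (∀ x, c x ∈ Set.Icc (0:ℝ) 1) ∧
    (∑ x : X, (P (x, a) / grpProb P a) * ubar (x, a) * c x) = w ∧
    (∑ x : X, (P (x, a) / grpProb P a) * r (x, a) * c x) = v}

/-- Conditional expected utility E[u | A = a]. -/
noncomputable def condEu {X : Type*} [Fintype X]
    (P : X × Bool → ℝ) (ubar : X × Bool → ℝ) (a : Bool) : ℝ :=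
  ∑ x : X, (P (x, a) / grpProb P a) * ubar (x, a)

/-! Fixing the common welfare level `w` decouples the two groups: a classifier is a pair of
group classifiers, its revenue is `P(A=0) R_0 + P(A=1) R_1`, and the u-WE constraint only asks
both to have welfare `w`. Hence, with `S_a(w)` the revenues of group-`a` classifiers of welfare
`w`, the u-WE revenues at level `w` are exactly `P(A=0) • S_0(w) + P(A=1) • S_1(w)`, whose
supremum is `P(A=0) R_0*(w) + P(A=1) R_1*(w)`. The attainable levels are `[0, min E[u|A=a]]`,
since a constant classifier reaches every level in `[0, E[u|A=a]]` and no classifier exceeds it.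
-/

open Finset Set Pointwise

section WeightedSums

variable {ι : Type*} [Fintype ι] {q c : ι → ℝ}

lemma sum_mul_le_sum_abs_of_mem_Icc (hc : ∀ i, c i ∈ Icc (0 : ℝ) 1) :
    ∑ i, q i * c i ≤ ∑ i, |q i| :=
  sum_le_sum fun i _ => calc
    q i * c i ≤ |q i| * c i := mul_le_mul_of_nonneg_right (le_abs_self _) (hc i).1
    _ ≤ |q i| := mul_le_of_le_one_right (abs_nonneg _) (hc i).2

lemma sum_mul_mem_Icc_of_mem_Icc (hq : ∀ i, 0 ≤ q i) (hc : ∀ i, c i ∈ Icc (0 : ℝ) 1) :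
    ∑ i, q i * c i ∈ Icc 0 (∑ i, q i) :=
  ⟨sum_nonneg fun i _ => mul_nonneg (hq i) (hc i).1,
    sum_le_sum fun i _ => mul_le_of_le_one_right (hq i) (hc i).2⟩

/-- The constant `w / ∑ q` works, also when `∑ q = 0`: then `w = 0` and division by zero
gives `0`. -/
lemma exists_mem_Icc_sum_mul_eq (hq : ∀ i, 0 ≤ q i) {w : ℝ} (hw : w ∈ Icc 0 (∑ i, q i)) :
    ∃ c : ι → ℝ, (∀ i, c i ∈ Icc (0 : ℝ) 1) ∧ ∑ i, q i * c i = w := by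
  have hsum : 0 ≤ ∑ i, q i := sum_nonneg fun i _ => hq i
  refine ⟨fun _ => w / ∑ i, q i,
    fun _ => ⟨div_nonneg hw.1 hsum, div_le_one_of_le₀ hw.2 hsum⟩, ?_⟩
  rw [← sum_mul]
  rcases hsum.eq_or_lt with h | h
  · rw [← h] at hw ⊢
    simp [le_antisymm hw.2 hw.1]
  · exact mul_div_cancel₀ w h.ne'

end WeightedSums

lemma Real.sSup_smul_add_smul {a b : ℝ} (ha : 0 ≤ a) (hb : 0 ≤ b) {s t : Set ℝ}
    (hs : s.Nonempty) (hs' : BddAbove s) (ht : t.Nonempty) (ht' : BddAbove t) :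
    sSup (a • s + b • t) = a * sSup s + b * sSup t := by
  rw [csSup_add hs.smul_set (hs'.smul_of_nonneg ha) ht.smul_set (ht'.smul_of_nonneg hb),
    Real.sSup_smul_of_nonneg ha, Real.sSup_smul_of_nonneg hb, smul_eq_mul, smul_eq_mul]

section Classifiers

variable {X : Type*} [Fintype X]

noncomputable def condDensity (P f : X × Bool → ℝ) (a : Bool) (x : X) : ℝ :=
  P (x, a) / grpProb P a * f (x, a)

def groupRevenues (P r ubar : X × Bool → ℝ) (a : Bool) (w : ℝ) : Set ℝ :=
  {v | ∃ c : X → ℝ, (∀ x, c x ∈ Icc (0 : ℝ) 1) ∧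
    ∑ x, condDensity P ubar a x * c x = w ∧ ∑ x, condDensity P r a x * c x = v}

def fairRevenues (P r ubar : X × Bool → ℝ) : Set ℝ :=
  {v | ∃ c : X × Bool → ℝ, (∀ z, c z ∈ Icc (0 : ℝ) 1) ∧
    welfareG P ubar c false = welfareG P ubar c true ∧ revenue P r c = v}

lemma RstarG_eq_sSup_groupRevenues (P r ubar : X × Bool → ℝ) (a : Bool) (w : ℝ) :
    RstarG P r ubar a w = sSup (groupRevenues P r ubar a w) :=
  rfl

lemma condEu_eq_sum_condDensity (P ubar : X × Bool → ℝ) (a : Bool) :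
    condEu P ubar a = ∑ x, condDensity P ubar a x :=
  rfl

lemma welfareG_eq_sum_condDensity (P ubar c : X × Bool → ℝ) (a : Bool) :
    welfareG P ubar c a = ∑ x, condDensity P ubar a x * c (x, a) := by
  rw [welfareG, sum_div]
  exact sum_congr rfl fun x _ => by rw [condDensity]; ring

lemma revenue_eq_add_grpProb_mul (P r c : X × Bool → ℝ) (h0 : grpProb P false ≠ 0)
    (h1 : grpProb P true ≠ 0) :
    revenue P r c = grpProb P false * ∑ x, condDensity P r false x * c (x, false) +
      grpProb P true * ∑ x, condDensity P r true x * c (x, true) := by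
  simp only [revenue, Fintype.sum_prod_type, Fintype.sum_bool, sum_add_distrib, mul_sum,
    condDensity]
  rw [add_comm]
  congr 1 <;> refine sum_congr rfl fun x _ => ?_ <;> field_simp

section Bounds

variable {P : X × Bool → ℝ} (hP : ∀ z, 0 ≤ P z) {a : Bool} (ha : 0 ≤ grpProb P a)
include hP ha

lemma condDensity_nonneg {f : X × Bool → ℝ} (hf : ∀ z, 0 ≤ f z) (x : X) :
    0 ≤ condDensity P f a x :=
  mul_nonneg (div_nonneg (hP _) ha) (hf _)

lemma condEu_nonneg {ubar : X × Bool → ℝ} (hu : ∀ z, 0 ≤ ubar z) : 0 ≤ condEu P ubar a :=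
  sum_nonneg fun x _ => condDensity_nonneg hP ha hu x

lemma groupRevenues_nonempty {r ubar : X × Bool → ℝ} (hu : ∀ z, 0 ≤ ubar z) {w : ℝ}
    (hw : w ∈ Icc 0 (condEu P ubar a)) : (groupRevenues P r ubar a w).Nonempty := by
  obtain ⟨c, hc, hcw⟩ := exists_mem_Icc_sum_mul_eq (condDensity_nonneg hP ha hu) hw
  exact ⟨_, c, hc, hcw, rfl⟩

end Bounds

lemma groupRevenues_bddAbove (P r ubar : X × Bool → ℝ) (a : Bool) (w : ℝ) :
    BddAbove (groupRevenues P r ubar a w) := by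
  refine ⟨∑ x, |condDensity P r a x|, ?_⟩
  rintro _ ⟨c, hc, -, rfl⟩
  exact sum_mul_le_sum_abs_of_mem_Icc hc

lemma fairRevenues_bddAbove (P r ubar : X × Bool → ℝ) : BddAbove (fairRevenues P r ubar) := by
  refine ⟨∑ z, |P z * r z|, ?_⟩
  rintro _ ⟨c, hc, -, rfl⟩
  exact sum_mul_le_sum_abs_of_mem_Icc hc

lemma zero_mem_fairRevenues (P r ubar : X × Bool → ℝ) : (0 : ℝ) ∈ fairRevenues P r ubar :=
  ⟨0, fun _ => ⟨le_rfl, zero_le_one⟩, by simp [welfareG], by simp [revenue]⟩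

lemma smul_add_smul_groupRevenues_subset_fairRevenues (P r ubar : X × Bool → ℝ)
    (h0 : grpProb P false ≠ 0) (h1 : grpProb P true ≠ 0) (w : ℝ) :
    grpProb P false • groupRevenues P r ubar false w +
      grpProb P true • groupRevenues P r ubar true w ⊆ fairRevenues P r ubar := by
  rintro _ ⟨_, ⟨_, ⟨c₀, hc₀, hw₀, rfl⟩, rfl⟩, _, ⟨_, ⟨c₁, hc₁, hw₁, rfl⟩, rfl⟩, rfl⟩
  refine ⟨fun z => cond z.2 (c₁ z.1) (c₀ z.1), fun ⟨x, a⟩ => ?_, ?_, ?_⟩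
  · cases a
    exacts [hc₀ x, hc₁ x]
  · rw [welfareG_eq_sum_condDensity, welfareG_eq_sum_condDensity]
    exact hw₀.trans hw₁.symm
  · rw [revenue_eq_add_grpProb_mul P r _ h0 h1]
    rfl

section Decomposition

variable {P r ubar : X × Bool → ℝ} (hP : ∀ z, 0 ≤ P z) (h0 : 0 < grpProb P false)
  (h1 : 0 < grpProb P true) (hu : ∀ z, 0 ≤ ubar z)
include hP h0 h1 hu

lemma exists_mem_Icc_revenue_le {c : X × Bool → ℝ} (hc : ∀ z, c z ∈ Icc (0 : ℝ) 1)
    (hfair : welfareG P ubar c false = welfareG P ubar c true) :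
    ∃ w ∈ Icc 0 (min (condEu P ubar false) (condEu P ubar true)), revenue P r c ≤
      grpProb P false * RstarG P r ubar false w + grpProb P true * RstarG P r ubar true w := by
  have hwel (a : Bool) (ha : 0 < grpProb P a) :
      welfareG P ubar c a ∈ Icc 0 (condEu P ubar a) := by
    rw [welfareG_eq_sum_condDensity, condEu_eq_sum_condDensity]
    exact sum_mul_mem_Icc_of_mem_Icc (condDensity_nonneg hP ha.le hu) fun x => hc (x, a)
  have hmem (a : Bool) : ∑ x, condDensity P r a x * c (x, a) ∈
      groupRevenues P r ubar a (welfareG P ubar c a) :=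
    ⟨fun x => c (x, a), fun x => hc _, (welfareG_eq_sum_condDensity ..).symm, rfl⟩
  refine ⟨welfareG P ubar c false,
    ⟨(hwel false h0).1, le_min (hwel false h0).2 (hfair ▸ (hwel true h1).2)⟩, ?_⟩
  rw [revenue_eq_add_grpProb_mul P r c h0.ne' h1.ne']
  gcongr
  · exact le_csSup (groupRevenues_bddAbove ..) (hmem false)
  · exact hfair ▸ le_csSup (groupRevenues_bddAbove ..) (hmem true)

lemma grpProb_mul_RstarG_add_le_sSup_fairRevenues {w : ℝ}
    (hw : w ∈ Icc 0 (min (condEu P ubar false) (condEu P ubar true))) :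
    grpProb P false * RstarG P r ubar false w + grpProb P true * RstarG P r ubar true w ≤
      sSup (fairRevenues P r ubar) := by
  have hne₀ :=
    groupRevenues_nonempty (r := r) hP h0.le hu ⟨hw.1, hw.2.trans (min_le_left _ _)⟩
  have hne₁ :=
    groupRevenues_nonempty (r := r) hP h1.le hu ⟨hw.1, hw.2.trans (min_le_right _ _)⟩
  rw [RstarG_eq_sSup_groupRevenues, RstarG_eq_sSup_groupRevenues,
    ← Real.sSup_smul_add_smul h0.le h1.le hne₀ (groupRevenues_bddAbove ..) hne₁
      (groupRevenues_bddAbove ..)]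
  exact csSup_le_csSup (fairRevenues_bddAbove P r ubar) (hne₀.smul_set.add hne₁.smul_set)
    (smul_add_smul_groupRevenues_subset_fairRevenues P r ubar h0.ne' h1.ne' w)

end Decomposition

end Classifiers

theorem stmt10_general {X : Type*} [Fintype X]
    (P : X × Bool → ℝ) (hP : ∀ z, 0 ≤ P z)
    (h0 : 0 < grpProb P false) (h1 : 0 < grpProb P true)
    (r ubar : X × Bool → ℝ) (hu : ∀ z, 0 ≤ ubar z) :
    sSup {v : ℝ | ∃ c : X × Bool → ℝ, (∀ z, c z ∈ Set.Icc (0:ℝ) 1) ∧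
        welfareG P ubar c false = welfareG P ubar c true ∧ revenue P r c = v} =
    sSup {v : ℝ | ∃ w ∈ Set.Icc (0:ℝ) (min (condEu P ubar false) (condEu P ubar true)),
        v = grpProb P false * RstarG P r ubar false w +
            grpProb P true * RstarG P r ubar true w} := by
  have hle (w : ℝ) (hw : w ∈ Icc 0 (min (condEu P ubar false) (condEu P ubar true))) :=
    grpProb_mul_RstarG_add_le_sSup_fairRevenues (r := r) hP h0 h1 hu hw
  apply le_antisymm
  · refine csSup_le ⟨0, zero_mem_fairRevenues P r ubar⟩ ?_
    rintro _ ⟨c, hc, hfair, rfl⟩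
    obtain ⟨w, hw, hrev⟩ := exists_mem_Icc_revenue_le hP h0 h1 hu hc hfair
    refine hrev.trans (le_csSup ⟨sSup (fairRevenues P r ubar), ?_⟩ ⟨w, hw, rfl⟩)
    rintro _ ⟨w, hw, rfl⟩
    exact hle w hw
  · refine csSup_le ⟨_, 0, ⟨le_rfl, le_min ?_ ?_⟩, rfl⟩ ?_
    · exact condEu_nonneg hP h0.le hu
    · exact condEu_nonneg hP h1.le hu
    · rintro _ ⟨w, hw, rfl⟩
      exact hle w hw

/-- max_{c u-WE} R(c) = max_{w ∈ [0, min(E[u|A=0],E[u|A=1])]}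
P(A=0)·R₀*(w) + P(A=1)·R₁*(w). -/
theorem stmt10 {X : Type*} [Fintype X]
    (P : X × Bool → ℝ) (hP : ∀ z, 0 ≤ P z) (hPsum : ∑ z, P z = 1)
    (h0 : 0 < grpProb P false) (h1 : 0 < grpProb P true)
    (r ubar : X × Bool → ℝ) (hu : ∀ z, 0 ≤ ubar z) :
    sSup {v : ℝ | ∃ c : X × Bool → ℝ, (∀ z, c z ∈ Set.Icc (0:ℝ) 1) ∧
        welfareG P ubar c false = welfareG P ubar c true ∧ revenue P r c = v} =
    sSup {v : ℝ | ∃ w ∈ Set.Icc (0:ℝ) (min (condEu P ubar false) (condEu P ubar true)),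
        v = grpProb P false * RstarG P r ubar false w +
            grpProb P true * RstarG P r ubar true w} :=
  stmt10_general P hP h0 h1 r ubar hu
end

section
/- If group a is u-disadvantaged (W_{u,c_unc*}(a) < W_{u,c_unc*}(1−a)), then the optimal u-Welfare-Equalizing classifier weakly increases the welfare of group a: W_{u,c_unc*}(a) ≤ W_{u,c_WE*}(a). -/
/-- The optimal unconstrained (threshold) classifier: 1 iff r(x,a) > 0. -/
noncomputable def cUnc {X : Type*} (r : X × Bool → ℝ) : X × Bool → ℝ :=
  fun z => if 0 < r z then 1 else 0

open Set

lemma apply_false_eq_apply_true_iff {α : Type*} (f : Bool → α) (a : Bool) :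
    f false = f true ↔ f a = f (!a) := by
  cases a <;> simp [eq_comm]

section Classifiers

variable {X : Type*}

def splice (a : Bool) (c d : X × Bool → ℝ) : X × Bool → ℝ :=
  fun z => if z.2 = a then c z else d z

lemma splice_apply_self (a : Bool) (c d : X × Bool → ℝ) (x : X) :
    splice a c d (x, a) = c (x, a) :=
  if_pos rfl

lemma splice_apply_not (a : Bool) (c d : X × Bool → ℝ) (x : X) :
    splice a c d (x, !a) = d (x, !a) :=
  if_neg (Bool.not_ne_self a)

lemma splice_mem {s : Set ℝ} {a : Bool} {c d : X × Bool → ℝ} (hc : ∀ z, c z ∈ s)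
    (hd : ∀ z, d z ∈ s) (z : X × Bool) : splice a c d z ∈ s := by
  unfold splice
  split_ifs
  exacts [hc z, hd z]

lemma cUnc_mem_Icc (r : X × Bool → ℝ) (z : X × Bool) : cUnc r z ∈ Icc (0 : ℝ) 1 := by
  unfold cUnc
  split_ifs <;> simp

lemma mul_le_mul_cUnc {P r c : X × Bool → ℝ} {z : X × Bool} (hP : 0 ≤ P z)
    (hc : c z ∈ Icc (0 : ℝ) 1) : P z * r z * c z ≤ P z * r z * cUnc r z := by
  unfold cUnc
  split_ifs with hr
  · exact mul_le_mul_of_nonneg_left hc.2 (mul_nonneg hP hr.le)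
  · rw [mul_zero]
    exact mul_nonpos_of_nonpos_of_nonneg (mul_nonpos_of_nonneg_of_nonpos hP (not_lt.1 hr)) hc.1

lemma mul_cUnc_le_of_eq {P r u c : X × Bool → ℝ} {z : X × Bool} (hP : 0 ≤ P z) (hu : 0 ≤ u z)
    (hc : c z ∈ Icc (0 : ℝ) 1) (h : P z * r z * cUnc r z = P z * r z * c z) :
    P z * u z * cUnc r z ≤ P z * u z * c z := by
  unfold cUnc at *
  split_ifs at h ⊢ with hr
  · rcases hP.eq_or_lt with hP0 | hPpos
    · simp [← hP0]
    · have hc1 : 1 = c z := mul_left_cancel₀ (mul_pos hPpos hr).ne' h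
      rw [hc1]
  · rw [mul_zero]
    exact mul_nonneg (mul_nonneg hP hu) hc.1

variable [Fintype X]

def groupSum (P f c : X × Bool → ℝ) (a : Bool) : ℝ :=
  ∑ x : X, P (x, a) * f (x, a) * c (x, a)

lemma welfareG_eq_groupSum_div (P ubar c : X × Bool → ℝ) (a : Bool) :
    welfareG P ubar c a = groupSum P ubar c a / grpProb P a :=
  rfl

lemma revenue_eq_groupSum_add (P r c : X × Bool → ℝ) (a : Bool) :
    revenue P r c = groupSum P r c a + groupSum P r c (!a) := by
  rw [revenue, Fintype.sum_prod_type_right, Fintype.sum_bool]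
  cases a
  · exact add_comm _ _
  · rfl

lemma groupSum_congr {P f c d : X × Bool → ℝ} {a : Bool} (h : ∀ x, c (x, a) = d (x, a)) :
    groupSum P f c a = groupSum P f d a := by
  simp only [groupSum, h]

lemma groupSum_smul_add_smul (P f c d : X × Bool → ℝ) (α β : ℝ) (a : Bool) :
    groupSum P f (α • c + β • d) a = α * groupSum P f c a + β * groupSum P f d a := by
  simp only [groupSum, Finset.mul_sum, ← Finset.sum_add_distrib]
  exact Finset.sum_congr rfl fun x _ => by simp only [Pi.add_apply, Pi.smul_apply, smul_eq_mul]; ring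

lemma welfareG_smul_add_smul (P ubar c d : X × Bool → ℝ) (α β : ℝ) (a : Bool) :
    welfareG P ubar (α • c + β • d) a = α * welfareG P ubar c a + β * welfareG P ubar d a := by
  simp only [welfareG_eq_groupSum_div, groupSum_smul_add_smul, add_div, mul_div_assoc]

lemma groupSum_splice_self (P f : X × Bool → ℝ) (a : Bool) (c d : X × Bool → ℝ) :
    groupSum P f (splice a c d) a = groupSum P f c a :=
  groupSum_congr (splice_apply_self a c d)

lemma groupSum_splice_not (P f : X × Bool → ℝ) (a : Bool) (c d : X × Bool → ℝ) :
    groupSum P f (splice a c d) (!a) = groupSum P f d (!a) :=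
  groupSum_congr (splice_apply_not a c d)

lemma welfareG_splice_self (P ubar : X × Bool → ℝ) (a : Bool) (c d : X × Bool → ℝ) :
    welfareG P ubar (splice a c d) a = welfareG P ubar c a := by
  simp only [welfareG_eq_groupSum_div, groupSum_splice_self]

lemma welfareG_splice_not (P ubar : X × Bool → ℝ) (a : Bool) (c d : X × Bool → ℝ) :
    welfareG P ubar (splice a c d) (!a) = welfareG P ubar d (!a) := by
  simp only [welfareG_eq_groupSum_div, groupSum_splice_not]

variable {P r c : X × Bool → ℝ}

lemma groupSum_le_groupSum_cUnc (hP : ∀ z, 0 ≤ P z) (hc : ∀ z, c z ∈ Icc (0 : ℝ) 1) (a : Bool) :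
    groupSum P r c a ≤ groupSum P r (cUnc r) a :=
  Finset.sum_le_sum fun _ _ => mul_le_mul_cUnc (hP _) (hc _)

lemma welfareG_cUnc_le_of_groupSum_le {ubar : X × Bool → ℝ} (hP : ∀ z, 0 ≤ P z)
    (hu : ∀ z, 0 ≤ ubar z) (hc : ∀ z, c z ∈ Icc (0 : ℝ) 1) {a : Bool}
    (h : groupSum P r (cUnc r) a ≤ groupSum P r c a) :
    welfareG P ubar (cUnc r) a ≤ welfareG P ubar c a := by
  have hterm := (Finset.sum_eq_sum_iff_of_le fun x _ => mul_le_mul_cUnc (hP (x, a)) (hc (x, a))).1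
    (le_antisymm (groupSum_le_groupSum_cUnc hP hc a) h)
  have hsum : groupSum P ubar (cUnc r) a ≤ groupSum P ubar c a :=
    Finset.sum_le_sum fun x hx => mul_cUnc_le_of_eq (hP _) (hu _) (hc _) (hterm x hx).symm
  exact div_le_div_of_nonneg_right hsum (Finset.sum_nonneg fun x _ => hP (x, a))

lemma groupSum_cUnc_le_of_revenue_splice_le (hP : ∀ z, 0 ≤ P z) (hc : ∀ z, c z ∈ Icc (0 : ℝ) 1)
    {a : Bool} {α β : ℝ} (hβ : 0 ≤ β) (hαβ : α + β = 1)
    (h : revenue P r (splice a (cUnc r) (α • c + β • cUnc r)) ≤ revenue P r c) :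
    groupSum P r (cUnc r) a ≤ groupSum P r c a := by
  rw [revenue_eq_groupSum_add _ _ _ a, revenue_eq_groupSum_add _ _ c a, groupSum_splice_self,
    groupSum_splice_not, groupSum_smul_add_smul, eq_sub_of_add_eq hαβ] at h
  have := mul_le_mul_of_nonneg_left (groupSum_le_groupSum_cUnc (r := r) hP hc (!a)) hβ
  linarith

end Classifiers

theorem stmt12_general {X : Type*} [Fintype X]
    (P : X × Bool → ℝ) (hP : ∀ z, 0 ≤ P z)
    (r ubar : X × Bool → ℝ) (hu : ∀ z, 0 ≤ ubar z)
    (cWE : X × Bool → ℝ) (hcWE : ∀ z, cWE z ∈ Set.Icc (0:ℝ) 1)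
    (hWE : welfareG P ubar cWE false = welfareG P ubar cWE true)
    (hopt : ∀ c : X × Bool → ℝ, (∀ z, c z ∈ Set.Icc (0:ℝ) 1) →
      welfareG P ubar c false = welfareG P ubar c true →
      revenue P r c ≤ revenue P r cWE)
    (a : Bool)
    (hdis : welfareG P ubar (cUnc r) a < welfareG P ubar (cUnc r) (!a)) :
    welfareG P ubar (cUnc r) a ≤ welfareG P ubar cWE a := by
  have hWEa := (apply_false_eq_apply_true_iff (welfareG P ubar cWE) a).1 hWE
  by_contra! hlt
  obtain ⟨α, β, hα, hβ, hαβ, hmix⟩ : welfareG P ubar (cUnc r) a ∈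
      segment ℝ (welfareG P ubar cWE (!a)) (welfareG P ubar (cUnc r) (!a)) := by
    rw [segment_eq_Icc (by linarith)]
    exact ⟨by linarith, hdis.le⟩
  set c := splice a (cUnc r) (α • cWE + β • cUnc r)
  have hc : ∀ z, c z ∈ Icc (0 : ℝ) 1 :=
    splice_mem (cUnc_mem_Icc r) fun z => convex_Icc 0 1 (hcWE z) (cUnc_mem_Icc r z) hα hβ hαβ
  have hcWelfare : welfareG P ubar c false = welfareG P ubar c true := by
    rw [apply_false_eq_apply_true_iff (welfareG P ubar c) a, welfareG_splice_self,
      welfareG_splice_not, welfareG_smul_add_smul, ← hmix, smul_eq_mul, smul_eq_mul]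
  have hrev := groupSum_cUnc_le_of_revenue_splice_le hP hcWE hβ hαβ (hopt c hc hcWelfare)
  exact hlt.not_ge (welfareG_cUnc_le_of_groupSum_le hP hu hcWE hrev)

/-- main theorem: if group a is u-disadvantaged under the optimal
unconstrained classifier, then the optimal u-WE classifier weakly increases the
welfare of group a. -/
theorem stmt12 {X : Type*} [Fintype X]
    (P : X × Bool → ℝ) (hP : ∀ z, 0 ≤ P z) (hPsum : ∑ z, P z = 1)
    (h0 : 0 < grpProb P false) (h1 : 0 < grpProb P true)
    (r ubar : X × Bool → ℝ) (hu : ∀ z, 0 ≤ ubar z)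
    (cWE : X × Bool → ℝ) (hcWE : ∀ z, cWE z ∈ Set.Icc (0:ℝ) 1)
    (hWE : welfareG P ubar cWE false = welfareG P ubar cWE true)
    (hopt : ∀ c : X × Bool → ℝ, (∀ z, c z ∈ Set.Icc (0:ℝ) 1) →
      welfareG P ubar c false = welfareG P ubar c true →
      revenue P r c ≤ revenue P r cWE)
    (a : Bool)
    (hdis : welfareG P ubar (cUnc r) a < welfareG P ubar (cUnc r) (!a)) :
    welfareG P ubar (cUnc r) a ≤ welfareG P ubar cWE a :=
  stmt12_general P hP r ubar hu cWE hcWE hWE hopt a hdis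
end

section
/- In the unawareness example with X = {0,1}, uniform distribution over (x,a), p(0,0)=2/3, p(1,0)=1/3, p(0,1)=1/3, p(1,1)=2/3, and threshold t ∈ (1/2, 2/3): the optimal unconstrained classifier gives loans to (0,0) and (1,1) yielding strictly positive bank revenue and strictly positive welfare (E[c·Y | A=a] > 0) to both groups, while the optimal unaware classifier (which must satisfy c(x,0)=c(x,1)) gives no loans at all, yielding zero revenue and zero welfare to both groups. Hence Unawareness strictly harms both groups and the bank. -/
/-!
An unaware classifier gives the same decision to `(x, 0)` and `(x, 1)`, so its revenue is a
nonnegative combination of the pair sums `g (x, 0) + g (x, 1)` of the conditional revenue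
`g = (α₊ + α₋) p - α₋`. Here `p (x, 0) + p (x, 1) = 1`, so each pair sum is `α₊ - α₋ < 0`
(as `t > 1/2`): unaware revenue is `≤ 0`, and it vanishes only for the zero classifier, which
is therefore the unique optimal unaware classifier and gives zero welfare. The threshold
classifier instead collects exactly the positive conditional revenues, which exist since
`t < 2/3`.
-/

open Finset

section Unaware

variable {X : Type*} [Fintype X]

theorem sum_mul_eq_sum_pair_of_unaware {c : X × Bool → ℝ} (g : X × Bool → ℝ)
    (hun : ∀ x, c (x, false) = c (x, true)) :
    ∑ z, c z * g z = ∑ x, c (x, true) * (g (x, false) + g (x, true)) := by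
  simp only [Fintype.sum_prod_type, Fintype.sum_bool, hun, mul_add, add_comm]

theorem sum_mul_nonpos_of_unaware {c g : X × Bool → ℝ} (hc : ∀ z, 0 ≤ c z)
    (hun : ∀ x, c (x, false) = c (x, true)) (hg : ∀ x, g (x, false) + g (x, true) < 0) :
    ∑ z, c z * g z ≤ 0 := by
  rw [sum_mul_eq_sum_pair_of_unaware g hun]
  exact sum_nonpos fun x _ => mul_nonpos_of_nonneg_of_nonpos (hc _) (hg x).le

theorem eq_zero_of_unaware_of_sum_mul_eq_zero {c g : X × Bool → ℝ} (hc : ∀ z, 0 ≤ c z)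
    (hun : ∀ x, c (x, false) = c (x, true)) (hg : ∀ x, g (x, false) + g (x, true) < 0)
    (h : ∑ z, c z * g z = 0) : c = 0 := by
  rw [sum_mul_eq_sum_pair_of_unaware g hun,
    sum_eq_zero_iff_of_nonpos fun x _ => mul_nonpos_of_nonneg_of_nonpos (hc _) (hg x).le] at h
  have htrue : ∀ x, c (x, true) = 0 := fun x =>
    (mul_eq_zero.mp (h x (mem_univ x))).resolve_right (hg x).ne
  funext ⟨x, b⟩
  cases b
  · rw [Pi.zero_apply, hun, htrue]
  · exact htrue x

end Unaware

theorem sum_threshold_mul_gain_pos {Z : Type*} [Fintype Z] {s m : ℝ} (hs : 0 < s)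
    (p : Z → ℝ) (h : ∃ z, m / s < p z) :
    0 < ∑ z, (if m / s < p z then 1 else 0) * (s * p z - m) := by
  have gain_pos : ∀ z, m / s < p z → 0 < s * p z - m := fun z hz => by
    rw [div_lt_iff₀' hs] at hz
    linarith
  obtain ⟨z₀, hz₀⟩ := h
  refine sum_pos' (fun z _ => ?_) ⟨z₀, mem_univ _, by simpa [hz₀] using gain_pos z₀ hz₀⟩
  split_ifs with hz
  · simpa using (gain_pos z hz).le
  · simp

theorem stmt19_general (ap am : ℝ) (ham : 0 < am)
    (ht : 1 / 2 < am / (ap + am) ∧ am / (ap + am) < 2 / 3)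
    (p : Bool × Bool → ℝ)
    (hp : p = fun z => if z.1 = z.2 then 2 / 3 else 1 / 3) :
    let t : ℝ := am / (ap + am)
    let cunc : Bool × Bool → ℝ := fun z => if t < p z then 1 else 0
    let R : (Bool × Bool → ℝ) → ℝ := fun c =>
      ∑ z : Bool × Bool, (1 / 4 : ℝ) * c z * ((ap + am) * p z - am)
    let Wel : (Bool × Bool → ℝ) → Bool → ℝ := fun c a =>
      ∑ x : Bool, (1 / 2 : ℝ) * p (x, a) * c (x, a)
    (cunc (false, false) = 1 ∧ cunc (true, true) = 1 ∧
      cunc (true, false) = 0 ∧ cunc (false, true) = 0) ∧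
    0 < R cunc ∧
    (∀ a : Bool, 0 < Wel cunc a) ∧
    (∀ c : Bool × Bool → ℝ, (∀ z, c z ∈ Set.Icc (0:ℝ) 1) →
      (∀ x, c (x, false) = c (x, true)) → R c ≤ 0) ∧
    (∀ c : Bool × Bool → ℝ, (∀ z, c z ∈ Set.Icc (0:ℝ) 1) →
      (∀ x, c (x, false) = c (x, true)) →
      (∀ c' : Bool × Bool → ℝ, (∀ z, c' z ∈ Set.Icc (0:ℝ) 1) →
        (∀ x, c' (x, false) = c' (x, true)) → R c' ≤ R c) →
      R c = 0 ∧ ∀ a : Bool, Wel c a = 0) := by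
  intro t cunc R Wel
  obtain ⟨ht_gt, ht_lt⟩ := ht
  have hs : 0 < ap + am := by
    by_contra! hs
    linarith [div_nonpos_of_nonneg_of_nonpos ham.le hs]
  set g : Bool × Bool → ℝ := fun z => (ap + am) * p z - am
  have hR : ∀ c, R c = 1 / 4 * ∑ z, c z * g z := fun c => by
    simp only [R, g, mul_sum, mul_assoc]
  have hpair : ∀ x, g (x, false) + g (x, true) < 0 := by
    have : ap < am := by rw [lt_div_iff₀ hs] at ht_gt; linarith
    intro x; cases x <;> simp only [g, hp] <;> norm_num <;> linarith
  have hcunc : cunc (false, false) = 1 ∧ cunc (true, true) = 1 ∧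
      cunc (true, false) = 0 ∧ cunc (false, true) = 0 := by
    simp only [cunc, t, hp]
    norm_num [ht_lt, (by linarith : ¬ am / (ap + am) < 1 / 3)]
  have hunaware : ∀ c : Bool × Bool → ℝ, (∀ z, c z ∈ Set.Icc (0:ℝ) 1) →
      (∀ x, c (x, false) = c (x, true)) → R c ≤ 0 := fun c hc hun => by
    rw [hR]
    linarith [sum_mul_nonpos_of_unaware (fun z => (hc z).1) hun hpair]
  refine ⟨hcunc, ?_, ?_, hunaware, fun c hc hun hopt => ?_⟩
  · rw [hR]
    exact mul_pos (by norm_num)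
      (sum_threshold_mul_gain_pos hs p ⟨(false, false), by simp [hp, ht_lt]⟩)
  · obtain ⟨h00, h11, h10, h01⟩ := hcunc
    intro a; cases a <;> simp only [Wel, hp, Fintype.sum_bool, h00, h11, h10, h01] <;> norm_num
  · have hR0 : R c = 0 :=
      le_antisymm (hunaware c hc hun) (by simpa [hR] using hopt 0 (fun _ => by simp) fun _ => rfl)
    have hc0 : c = 0 := eq_zero_of_unaware_of_sum_mul_eq_zero (fun z => (hc z).1) hun hpair
      (by rw [hR] at hR0; linarith)
    exact ⟨hR0, fun a => by simp [Wel, hc0]⟩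

/-- in the unawareness example (uniform distribution on Bool × Bool,
p(x,a) = 2/3 if x = a else 1/3, threshold t ∈ (1/2, 2/3)), the optimal unconstrained
classifier gives loans to (0,0) and (1,1), yielding strictly positive revenue and
strictly positive welfare to both groups; any unaware classifier has revenue ≤ 0, and
any optimal unaware classifier yields zero revenue and zero welfare to both groups. -/
theorem stmt19 (ap am : ℝ) (hap : 0 < ap) (ham : 0 < am)
    (ht : 1 / 2 < am / (ap + am) ∧ am / (ap + am) < 2 / 3)
    (p : Bool × Bool → ℝ)
    (hp : p = fun z => if z.1 = z.2 then 2 / 3 else 1 / 3) :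
    let t : ℝ := am / (ap + am)
    let cunc : Bool × Bool → ℝ := fun z => if t < p z then 1 else 0
    let R : (Bool × Bool → ℝ) → ℝ := fun c =>
      ∑ z : Bool × Bool, (1 / 4 : ℝ) * c z * ((ap + am) * p z - am)
    let Wel : (Bool × Bool → ℝ) → Bool → ℝ := fun c a =>
      ∑ x : Bool, (1 / 2 : ℝ) * p (x, a) * c (x, a)
    (cunc (false, false) = 1 ∧ cunc (true, true) = 1 ∧
      cunc (true, false) = 0 ∧ cunc (false, true) = 0) ∧
    0 < R cunc ∧
    (∀ a : Bool, 0 < Wel cunc a) ∧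
    (∀ c : Bool × Bool → ℝ, (∀ z, c z ∈ Set.Icc (0:ℝ) 1) →
      (∀ x, c (x, false) = c (x, true)) → R c ≤ 0) ∧
    (∀ c : Bool × Bool → ℝ, (∀ z, c z ∈ Set.Icc (0:ℝ) 1) →
      (∀ x, c (x, false) = c (x, true)) →
      (∀ c' : Bool × Bool → ℝ, (∀ z, c' z ∈ Set.Icc (0:ℝ) 1) →
        (∀ x, c' (x, false) = c' (x, true)) → R c' ≤ R c) →
      R c = 0 ∧ ∀ a : Bool, Wel c a = 0) :=
  stmt19_general ap am ham ht p hp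
end
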